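/- arXiv:1108.2943 — 2 statements merged into one kernel-verified Lean document; each statement's English description precedes it below -/
import Mathlib

section
/- Let U ⊆ ℂ be an open set, m ≥ 1, and let ε : Fin m → ℝ satisfy ε α ∈ {-1, 1} for every α. Let Ω : U → (Fin m → ℂ) be continuously ℝ-differentiable and let A : U → Matrix (Fin m) (Fin m) ℂ be a map with A p α β = - A p β α for all p ∈ U and all indices α, β. Suppose that for every α and every p ∈ U the Wirtinger derivative satisfies ∂Ω_α/∂z̄ (p) = - ∑_β ε β · Ω_β(p) · conj(A p β α). Then the function h : U → ℂ defined by h(p) = ∑_α ε α · (Ω_α(p))² satisfies ∂h/∂z̄ = 0 at every point of U; in particular, h is holomorphic on U. -/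
/-!
Since `∂/∂z̄` is a derivation, `∂h/∂z̄ = 2 ∑_α ε_α Ω_α ∂Ω_α/∂z̄`, and the system turns this into
`-2 ∑_{α,β} x_α x_β conj(A_{βα})` with `x = εΩ`: the quadratic form of an antisymmetric matrix,
which vanishes. Vanishing of `∂h/∂z̄` is the Cauchy–Riemann equation, so `h` is holomorphic.
-/

open Complex

/-- The Wirtinger derivative `∂f/∂z̄ = (1/2)(∂f/∂x + i ∂f/∂y)` of a map `f : ℂ → ℂ`
that is differentiable in the real sense. -/
noncomputable def wirtingerBar (f : ℂ → ℂ) (p : ℂ) : ℂ :=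
  (1 / 2) * (fderiv ℝ f p 1 + Complex.I * fderiv ℝ f p Complex.I)

open Finset

theorem sum_mul_sum_mul_eq_zero_of_antisymm {ι R : Type*} [Fintype ι] [CommRing R]
    [IsAddTorsionFree R] (x : ι → R) (B : ι → ι → R) (hB : ∀ i j, B i j = -B j i) :
    ∑ i, x i * ∑ j, x j * B j i = 0 := by
  refine self_eq_neg.mp ?_
  simp_rw [mul_sum]
  conv_lhs => rw [sum_comm]
  simp only [← sum_neg_distrib]
  refine sum_congr rfl fun i _ => sum_congr rfl fun j _ => ?_
  rw [hB]
  ring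

section Wirtinger

variable {f g : ℂ → ℂ} {p : ℂ}

theorem HasFDerivAt.wirtingerBar_eq {L : ℂ →L[ℝ] ℂ} (hf : HasFDerivAt f L p) :
    wirtingerBar f p = 1 / 2 * (L 1 + I * L I) := by
  rw [wirtingerBar, hf.fderiv]

theorem wirtingerBar_mul (hf : DifferentiableAt ℝ f p) (hg : DifferentiableAt ℝ g p) :
    wirtingerBar (fun z => f z * g z) p = f p * wirtingerBar g p + g p * wirtingerBar f p := by
  rw [(hf.hasFDerivAt.fun_mul hg.hasFDerivAt).wirtingerBar_eq, wirtingerBar, wirtingerBar]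
  simp only [add_apply, smul_apply, smul_eq_mul]
  ring

theorem wirtingerBar_const_mul (c : ℂ) (hf : DifferentiableAt ℝ f p) :
    wirtingerBar (fun z => c * f z) p = c * wirtingerBar f p := by
  rw [(hf.hasFDerivAt.const_mul c).wirtingerBar_eq, wirtingerBar]
  simp only [smul_apply, smul_eq_mul]
  ring

theorem wirtingerBar_sq (hf : DifferentiableAt ℝ f p) :
    wirtingerBar (fun z => f z ^ 2) p = 2 * f p * wirtingerBar f p := by
  simp_rw [sq, wirtingerBar_mul hf hf]
  ring

theorem wirtingerBar_sum {ι : Type*} (s : Finset ι) {f : ι → ℂ → ℂ}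
    (hf : ∀ i ∈ s, DifferentiableAt ℝ (f i) p) :
    wirtingerBar (fun z => ∑ i ∈ s, f i z) p = ∑ i ∈ s, wirtingerBar (f i) p := by
  rw [(HasFDerivAt.fun_sum fun i hi => (hf i hi).hasFDerivAt).wirtingerBar_eq]
  simp only [_root_.sum_apply, wirtingerBar, mul_sum, ← sum_add_distrib]

theorem differentiableAt_complex_of_wirtingerBar_eq_zero (hf : DifferentiableAt ℝ f p)
    (h : wirtingerBar f p = 0) : DifferentiableAt ℂ f p := by
  refine differentiableAt_complex_iff_differentiableAt_real.2 ⟨hf, ?_⟩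
  rw [wirtingerBar] at h
  rw [smul_eq_mul]
  linear_combination (-2 * I) * h + fderiv ℝ f p I * I_sq

end Wirtinger

theorem holomorphic_sum_sq_of_antisymm_system_general
    (U : Set ℂ) (hU : IsOpen U) (m : ℕ)
    (ε : Fin m → ℝ)
    (Ω : ℂ → Fin m → ℂ) (hΩ : ContDiffOn ℝ 1 Ω U)
    (A : ℂ → Matrix (Fin m) (Fin m) ℂ)
    (hA : ∀ p ∈ U, ∀ α β, A p α β = - A p β α)
    (hsys : ∀ α, ∀ p ∈ U,
      wirtingerBar (fun z => Ω z α) p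
        = - ∑ β, (ε β : ℂ) * Ω p β * (starRingEnd ℂ) (A p β α))
    (h : ℂ → ℂ) (hh : ∀ p, h p = ∑ α, (ε α : ℂ) * (Ω p α) ^ 2) :
    (∀ p ∈ U, wirtingerBar h p = 0) ∧ DifferentiableOn ℂ h U := by
  obtain rfl : h = fun p => ∑ α, (ε α : ℂ) * Ω p α ^ 2 := funext hh
  have hΩα : ∀ p ∈ U, ∀ α, DifferentiableAt ℝ (fun z => Ω z α) p := fun p hp =>
    differentiableAt_pi.mp ((hΩ.differentiableOn one_ne_zero p hp).differentiableAt
      (hU.mem_nhds hp))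
  have hterm : ∀ p ∈ U, ∀ α, DifferentiableAt ℝ (fun z => (ε α : ℂ) * Ω z α ^ 2) p :=
    fun p hp α => ((hΩα p hp α).fun_pow 2).const_mul _
  have hbar : ∀ p ∈ U, wirtingerBar (fun z => ∑ α, (ε α : ℂ) * Ω z α ^ 2) p = 0 := by
    intro p hp
    calc wirtingerBar (fun z => ∑ α, (ε α : ℂ) * Ω z α ^ 2) p
        = -2 * ∑ α, (ε α * Ω p α) * ∑ β, (ε β * Ω p β) * starRingEnd ℂ (A p β α) := by
          rw [wirtingerBar_sum _ fun α _ => hterm p hp α, mul_sum]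
          refine sum_congr rfl fun α _ => ?_
          rw [wirtingerBar_const_mul _ ((hΩα p hp α).fun_pow 2), wirtingerBar_sq (hΩα p hp α),
            hsys α p hp]
          ring
      _ = 0 := by
          rw [sum_mul_sum_mul_eq_zero_of_antisymm _ _ fun β α => by rw [hA p hp, map_neg],
            mul_zero]
  exact ⟨hbar, fun p hp => (differentiableAt_complex_of_wirtingerBar_eq_zero
    (DifferentiableAt.fun_sum fun α _ => hterm p hp α) (hbar p hp)).differentiableWithinAt⟩

/-- If `Ω : U → ℂ^m` is continuously ℝ-differentiable, `A` is antisymmetric, `ε α ∈ {-1,1}`,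
and `∂Ω_α/∂z̄ = - ∑_β ε β Ω_β conj(A_{βα})`, then `h = ∑_α ε α Ω_α²` satisfies
`∂h/∂z̄ = 0` on `U`; in particular `h` is holomorphic on `U`. -/
theorem holomorphic_sum_sq_of_antisymm_system
    (U : Set ℂ) (hU : IsOpen U) (m : ℕ) (hm : 1 ≤ m)
    (ε : Fin m → ℝ) (hε : ∀ α, ε α ∈ ({-1, 1} : Set ℝ))
    (Ω : ℂ → Fin m → ℂ) (hΩ : ContDiffOn ℝ 1 Ω U)
    (A : ℂ → Matrix (Fin m) (Fin m) ℂ)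
    (hA : ∀ p ∈ U, ∀ α β, A p α β = - A p β α)
    (hsys : ∀ α, ∀ p ∈ U,
      wirtingerBar (fun z => Ω z α) p
        = - ∑ β, (ε β : ℂ) * Ω p β * (starRingEnd ℂ) (A p β α))
    (h : ℂ → ℂ) (hh : ∀ p, h p = ∑ α, (ε α : ℂ) * (Ω p α) ^ 2) :
    (∀ p ∈ U, wirtingerBar h p = 0) ∧ DifferentiableOn ℂ h U :=
  holomorphic_sum_sq_of_antisymm_system_general U hU m ε Ω hΩ A hA hsys h hh
end

section
/- Let m ≥ 1, let A, B : Matrix (Fin m) (Fin m) ℝ be constant matrices, let U ⊆ ℝ × ℝ be an open connected set, and let f : ℝ × ℝ → (Fin m → ℝ) be differentiable on U such that for every p ∈ U the partial derivatives satisfy ∂f/∂u (p) = A.mulVec (f p) and ∂f/∂v (p) = B.mulVec (f p), where u and v denote the two coordinates of ℝ × ℝ. If f(p₀) = 0 for some point p₀ ∈ U, then f(p) = 0 for every p ∈ U. -/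
/-!
Along a segment `t ↦ p + t • d` inside `U`, the system restricts to the linear ODE
`g' = (d.1 • A + d.2 • B) g`, so by uniqueness for ODEs with Lipschitz right-hand side a
solution vanishing at one point of a ball in `U` vanishes on the whole ball. Hence the zero set
of `f` is open; it is also relatively closed in `U` by continuity, so it is all of `U` by
connectedness.
-/

open Set Metric

section LinearSystem

variable {E F : Type*} [NormedAddCommGroup E] [NormedSpace ℝ E]
  [NormedAddCommGroup F] [NormedSpace ℝ F] {f : E → F} {Ω : E → F →L[ℝ] F}

theorem eq_zero_of_fderiv_apply_eq_of_segment {p q : E}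
    (hf : ∀ x ∈ segment ℝ p q, DifferentiableAt ℝ f x)
    (hΩ : ∀ x ∈ segment ℝ p q, fderiv ℝ f x (q - p) = Ω (q - p) (f x)) (hp : f p = 0) :
    f q = 0 := by
  set c : ℝ → E := fun t => p + t • (q - p)
  have hc : ∀ t ∈ Icc (0 : ℝ) 1, c t ∈ segment ℝ p q := fun t ht => by
    rw [segment_eq_image']
    exact mem_image_of_mem _ ht
  have hderiv : ∀ t ∈ Icc (0 : ℝ) 1, HasDerivAt (f ∘ c) (Ω (q - p) ((f ∘ c) t)) t := by
    intro t ht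
    have hc' : HasDerivAt c (q - p) t :=
      (((hasDerivAt_id t).smul_const (q - p)).const_add p).congr_deriv (one_smul ℝ _)
    rw [Function.comp_apply, ← hΩ _ (hc t ht)]
    exact (hf _ (hc t ht)).hasFDerivAt.comp_hasDerivAt t hc'
  have hsol := ODE_solution_unique (v := fun _ => Ω (q - p)) (g := fun _ => 0)
    (fun _ => (Ω (q - p)).lipschitz)
    (HasDerivAt.continuousOn hderiv)
    (fun t ht => (hderiv t (Ico_subset_Icc_self ht)).hasDerivWithinAt)
    continuousOn_const (fun t _ => by simpa using (hasDerivAt_const t (0 : F)).hasDerivWithinAt)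
    (by simpa [c] using hp) (right_mem_Icc.mpr zero_le_one)
  simpa [c] using hsol

theorem isOpen_setOf_mem_and_eq_zero_of_fderiv_apply_eq {U : Set E} (hU : IsOpen U)
    (hf : DifferentiableOn ℝ f U) (hΩ : ∀ x ∈ U, ∀ d, fderiv ℝ f x d = Ω d (f x)) :
    IsOpen {x | x ∈ U ∧ f x = 0} := by
  refine isOpen_iff_forall_mem_open.mpr fun p ⟨hpU, hp⟩ => ?_
  obtain ⟨r, hr, hball⟩ := Metric.isOpen_iff.mp hU p hpU
  refine ⟨ball p r, fun q hq => ⟨hball hq, ?_⟩, isOpen_ball, mem_ball_self hr⟩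
  have hseg : segment ℝ p q ⊆ U :=
    ((convex_ball p r).segment_subset (mem_ball_self hr) hq).trans hball
  exact eq_zero_of_fderiv_apply_eq_of_segment
    (fun x hx => hf.differentiableAt (hU.mem_nhds (hseg hx)))
    (fun x hx => hΩ x (hseg hx) _) hp

theorem eqOn_zero_of_fderiv_apply_eq {U : Set E} (hU : IsOpen U) (hconn : IsPreconnected U)
    (hf : DifferentiableOn ℝ f U) (hΩ : ∀ x ∈ U, ∀ d, fderiv ℝ f x d = Ω d (f x))
    {p₀ : E} (hp₀ : p₀ ∈ U) (hf0 : f p₀ = 0) : EqOn f 0 U := by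
  set Z := {x | x ∈ U ∧ f x = 0}
  have hZ_closed : closure Z ∩ U ⊆ Z := fun x ⟨hxZ, hxU⟩ => by
    have hfx : ContinuousAt f x := hf.continuousOn.continuousAt (hU.mem_nhds hxU)
    have := hfx.continuousWithinAt.mem_closure hxZ (t := {0}) fun y hy => hy.2
    exact ⟨hxU, by simpa using this⟩
  have hZ_open : IsOpen Z := isOpen_setOf_mem_and_eq_zero_of_fderiv_apply_eq hU hf hΩ
  exact fun x hx =>
    (hconn.subset_of_closure_inter_subset hZ_open ⟨p₀, hp₀, hp₀, hf0⟩ hZ_closed hx).2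

end LinearSystem

theorem fderiv_apply_eq_mulVec_of_partials {m : ℕ} {A B : Matrix (Fin m) (Fin m) ℝ}
    {f : ℝ × ℝ → Fin m → ℝ} {x : ℝ × ℝ}
    (hu : fderiv ℝ f x (1, 0) = A.mulVec (f x))
    (hv : fderiv ℝ f x (0, 1) = B.mulVec (f x)) (d : ℝ × ℝ) :
    fderiv ℝ f x d = (d.1 • A + d.2 • B).mulVec (f x) := by
  have hd : d = d.1 • ((1 : ℝ), (0 : ℝ)) + d.2 • ((0 : ℝ), (1 : ℝ)) := by ext <;> simp
  rw [hd, map_add, map_smul, map_smul, hu, hv, Matrix.add_mulVec, Matrix.smul_mulVec,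
    Matrix.smul_mulVec]
  simp

theorem vanishing_of_constant_coefficient_linear_system_general
    (m : ℕ) (A B : Matrix (Fin m) (Fin m) ℝ)
    (U : Set (ℝ × ℝ)) (hU : IsOpen U) (hconn : IsConnected U)
    (f : ℝ × ℝ → Fin m → ℝ) (hf : DifferentiableOn ℝ f U)
    (hfu : ∀ p ∈ U, fderiv ℝ f p (1, 0) = A.mulVec (f p))
    (hfv : ∀ p ∈ U, fderiv ℝ f p (0, 1) = B.mulVec (f p))
    (p₀ : ℝ × ℝ) (hp₀ : p₀ ∈ U) (hf0 : f p₀ = 0) :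
    ∀ p ∈ U, f p = 0 :=
  eqOn_zero_of_fderiv_apply_eq
    (Ω := fun d : ℝ × ℝ => (d.1 • A + d.2 • B).mulVecLin.toContinuousLinearMap)
    hU hconn.isPreconnected hf
    (fun x hx d => fderiv_apply_eq_mulVec_of_partials (hfu x hx) (hfv x hx) d) hp₀ hf0

/-- Uniqueness for an overdetermined first-order linear system with constant coefficients:
if `∂f/∂u = A f` and `∂f/∂v = B f` on an open connected set `U` and `f` vanishes at one
point of `U`, then `f` vanishes identically on `U`. -/
theorem vanishing_of_constant_coefficient_linear_system
    (m : ℕ) (hm : 1 ≤ m) (A B : Matrix (Fin m) (Fin m) ℝ)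
    (U : Set (ℝ × ℝ)) (hU : IsOpen U) (hconn : IsConnected U)
    (f : ℝ × ℝ → Fin m → ℝ) (hf : DifferentiableOn ℝ f U)
    (hfu : ∀ p ∈ U, fderiv ℝ f p (1, 0) = A.mulVec (f p))
    (hfv : ∀ p ∈ U, fderiv ℝ f p (0, 1) = B.mulVec (f p))
    (p₀ : ℝ × ℝ) (hp₀ : p₀ ∈ U) (hf0 : f p₀ = 0) :
    ∀ p ∈ U, f p = 0 :=
  vanishing_of_constant_coefficient_linear_system_general m A B U hU hconn f hf hfu hfv p₀ hp₀ hf0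
end
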